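/- arXiv:2602.07867 — 2 statements merged into one kernel-verified Lean document; each statement's English description precedes it below -/
import Mathlib

section
/- The operator Q = Σ_j (X_j X_{j+1} Y_{j+2} X_{j+3} Z_{j+4} + X_j Y_{j+2} Z_{j+3}) commutes with the Hamiltonian H = Σ_j (c₁ X_j X_{j+1} Z_{j+2} + c₂ Z_j X_{j+1} X_{j+2}) on a periodic chain (take c₁ = c₂ = 1), for chain length N ≥ 7 with indices mod N. -/
open Matrix Kronecker

noncomputable section

/-- Pauli X. -/
def σ1 : Matrix (Fin 2) (Fin 2) ℂ := !![0, 1; 1, 0]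
/-- Pauli Y. -/
def σ2 : Matrix (Fin 2) (Fin 2) ℂ := !![0, -Complex.I; Complex.I, 0]
/-- Pauli Z. -/
def σ3 : Matrix (Fin 2) (Fin 2) ℂ := !![1, 0; 0, -1]

/-- The operator acting as `A` on site `j` of a chain of `N` sites with local
space indexed by `d`, and as the identity on all other sites. -/
def site {d : Type} [Fintype d] [DecidableEq d] (N : ℕ) (j : ℕ)
    (A : Matrix d d ℂ) : Matrix (Fin N → d) (Fin N → d) ℂ :=
  Matrix.of fun x y =>
    ∏ k : Fin N, if (k : ℕ) = j then A (x k) (y k) else (if x k = y k then 1 else 0)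

/-- Pauli X at site `j` of a spin-1/2 chain of `N` sites. -/
def PX (N j : ℕ) : Matrix (Fin N → Fin 2) (Fin N → Fin 2) ℂ := site N j σ1
/-- Pauli Y at site `j`. -/
def PY (N j : ℕ) : Matrix (Fin N → Fin 2) (Fin N → Fin 2) ℂ := site N j σ2
/-- Pauli Z at site `j`. -/
def PZ (N j : ℕ) : Matrix (Fin N → Fin 2) (Fin N → Fin 2) ℂ := site N j σ3

/-!
Both operators are translation-invariant sums of Pauli strings. A product of two Pauli strings
is a phase times a Pauli string, and two strings commute when their phases agree in both orders,
in particular when their supports are disjoint. Expanding `[Q, H]` as a double sum and sorting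
the pairs of densities by their relative offset `d`, only the seven offsets `-2 ≤ d ≤ 4` have
overlapping supports; since `N ≥ 7` each such pair fits into one window of `N` consecutive sites,
where the commutator is computed letter by letter. The surviving terms cancel once every string
is translated back to a common origin.
-/

inductive Pauli
  | I | X | Y | Z

namespace Pauli

def toMatrix : Pauli → Matrix (Fin 2) (Fin 2) ℂ
  | I => 1
  | X => σ1
  | Y => σ2
  | Z => σ3

protected def mul : Pauli → Pauli → Pauli
  | I, a | a, I => a
  | X, X | Y, Y | Z, Z => I
  | X, Y | Y, X => Z
  | Y, Z | Z, Y => X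
  | Z, X | X, Z => Y

instance : Mul Pauli := ⟨Pauli.mul⟩

theorem mul_def (a b : Pauli) : a * b = Pauli.mul a b := rfl

def phase : Pauli → Pauli → ℂ
  | X, Y | Y, Z | Z, X => Complex.I
  | Y, X | Z, Y | X, Z => -Complex.I
  | _, _ => 1

theorem toMatrix_mul (a b : Pauli) : a.toMatrix * b.toMatrix = phase a b • (a * b).toMatrix := by
  cases a <;> cases b <;> ext i j <;> fin_cases i <;> fin_cases j <;>
    simp [toMatrix, phase, mul_def, Pauli.mul, σ1, σ2, σ3, Matrix.mul_apply, Fin.sum_univ_two,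
      Matrix.one_apply]

@[simp] theorem I_mul (a : Pauli) : I * a = a := by cases a <;> rfl

@[simp] theorem mul_I (a : Pauli) : a * I = a := by cases a <;> rfl

protected theorem mul_comm (a b : Pauli) : a * b = b * a := by cases a <;> cases b <;> rfl

@[simp] theorem phase_I_left (a : Pauli) : phase I a = 1 := by cases a <;> rfl

@[simp] theorem phase_I_right (a : Pauli) : phase a I = 1 := by cases a <;> rfl

def wordMul : List Pauli → List Pauli → List Pauli
  | [], w => w
  | v, [] => v
  | a :: v, b :: w => a * b :: wordMul v w

def wordPhase : List Pauli → List Pauli → ℂ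
  | [], _ => 1
  | _ :: _, [] => 1
  | a :: v, b :: w => phase a b * wordPhase v w

@[simp] theorem wordPhase_nil_right (v : List Pauli) : wordPhase v [] = 1 := by
  cases v <;> rfl

theorem getD_wordMul (v w : List Pauli) (n : ℕ) :
    (wordMul v w).getD n I = v.getD n I * w.getD n I := by
  induction v generalizing w n with
  | nil => simp [wordMul]
  | cons a v ih =>
    cases w with
    | nil => simp [wordMul]
    | cons b w => cases n <;> simp_all [wordMul]

theorem wordMul_comm (v w : List Pauli) : wordMul v w = wordMul w v := by
  induction v generalizing w with
  | nil => cases w <;> rfl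
  | cons a v ih => cases w <;> simp [wordMul, ih, Pauli.mul_comm a]

theorem prod_range_phase_getD {v w : List Pauli} {n : ℕ} (hv : v.length ≤ n)
    (hw : w.length ≤ n) :
    ∏ i ∈ Finset.range n, phase (v.getD i I) (w.getD i I) = wordPhase v w := by
  induction n generalizing v w with
  | zero => simp_all
  | succ n ih =>
    rw [Finset.prod_range_succ']
    cases v <;> cases w <;> simp_all [wordPhase, mul_comm]

theorem wordPhase_replicate_append_eq_one {v : List Pauli} {m : ℕ} (w : List Pauli)
    (hv : v.length ≤ m) :
    wordPhase v (List.replicate m I ++ w) = 1 ∧ wordPhase (List.replicate m I ++ w) v = 1 := by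
  induction m generalizing v with
  | zero => simp_all [wordPhase]
  | succ m ih =>
    cases v with
    | nil => simp [wordPhase]
    | cons a v => simp_all [wordPhase, List.replicate_succ]

end Pauli

section PiKronecker

variable {d : Type} {N : ℕ}

def piKronecker (f : Fin N → Matrix d d ℂ) : Matrix (Fin N → d) (Fin N → d) ℂ :=
  Matrix.of fun x y => ∏ k, f k (x k) (y k)

theorem piKronecker_mul [Fintype d] (f g : Fin N → Matrix d d ℂ) :
    piKronecker f * piKronecker g = piKronecker (f * g) := by
  ext x y
  simp only [piKronecker, Matrix.mul_apply, Matrix.of_apply, Pi.mul_apply, Fintype.prod_sum,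
    ← Finset.prod_mul_distrib]

theorem piKronecker_smul (c : Fin N → ℂ) (f : Fin N → Matrix d d ℂ) :
    piKronecker (fun k => c k • f k) = (∏ k, c k) • piKronecker f := by
  ext x y
  simp [piKronecker, Finset.prod_mul_distrib]

theorem site_eq_piKronecker [Fintype d] [DecidableEq d] (j : ℕ) (A : Matrix d d ℂ) :
    site N j A = piKronecker fun k => if (k : ℕ) = j then A else 1 := by
  ext x y
  simp only [site, piKronecker, Matrix.of_apply]
  congr! 2 with k
  split_ifs <;> simp [Matrix.one_apply, *]

end PiKronecker

open Pauli

/-- The word `w` written on the sites `x, x + 1, …`; letters past the `N`-th are never read. -/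
def pauliString (N : ℕ) (x : ZMod N) (w : List Pauli) :
    Matrix (Fin N → Fin 2) (Fin N → Fin 2) ℂ :=
  piKronecker fun k : Fin N => (w.getD (((k : ℕ) : ZMod N) - x).val I).toMatrix

section PauliString

variable {N : ℕ}

theorem pauliString_append_replicate (x : ZMod N) (w : List Pauli) (n : ℕ) :
    pauliString N x (w ++ List.replicate n I) = pauliString N x w := by
  unfold pauliString
  congr 1 with k
  congr 1
  rcases lt_or_ge (((k : ℕ) : ZMod N) - x).val w.length with h | h
  · exact List.getD_append _ _ _ _ h
  · rw [List.getD_append_right _ _ _ _ h, List.getD_eq_default _ _ h]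
    simp only [List.getD_eq_getElem?_getD, List.getElem?_replicate]
    split_ifs <;> rfl

theorem site_mod_eq_pauliString (j : ℕ) (a : Pauli) :
    site N (j % N) a.toMatrix = pauliString N j [a] := by
  rw [site_eq_piKronecker, pauliString]
  congr 1 with k
  rcases hz : (((k : ℕ) : ZMod N) - j).val with _ | m
  · rw [ZMod.val_eq_zero, sub_eq_zero, ZMod.natCast_eq_natCast_iff',
      Nat.mod_eq_of_lt k.isLt] at hz
    simp [hz]
  · have : (k : ℕ) ≠ j % N := by
      intro h
      rw [h, ZMod.natCast_mod, sub_self, ZMod.val_zero] at hz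
      omega
    rw [if_neg this]
    rfl

variable [NeZero N]

theorem prod_val_natCast_sub {M : Type*} [CommMonoid M] (x : ZMod N) (g : ℕ → M) :
    ∏ k : Fin N, g (((k : ℕ) : ZMod N) - x).val = ∏ i ∈ Finset.range N, g i := by
  rw [← Fin.prod_univ_eq_prod_range]
  refine Fintype.prod_bijective (fun k => ⟨_, ZMod.val_lt (((k : ℕ) : ZMod N) - x)⟩) ?_ _ _
    fun _ => rfl
  rw [← Finite.injective_iff_bijective]
  intro k k' h
  have h' := congrArg ZMod.val (sub_left_inj.mp (ZMod.val_injective N (Fin.mk.inj h)))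
  exact Fin.ext (by simpa [ZMod.val_natCast, Nat.mod_eq_of_lt k.isLt,
    Nat.mod_eq_of_lt k'.isLt] using h')

theorem pauliString_mul (x : ZMod N) {v w : List Pauli} (hv : v.length ≤ N)
    (hw : w.length ≤ N) :
    pauliString N x v * pauliString N x w = wordPhase v w • pauliString N x (wordMul v w) := by
  rw [pauliString, pauliString, piKronecker_mul, pauliString, ← prod_range_phase_getD hv hw,
    ← prod_val_natCast_sub x, ← piKronecker_smul]
  congr 1
  funext k
  simp only [Pi.mul_apply, toMatrix_mul, getD_wordMul]

theorem pauliString_add_one (x : ZMod N) {w : List Pauli} (hw : w.length < N) :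
    pauliString N (x + 1) w = pauliString N x (I :: w) := by
  unfold pauliString
  congr 1
  funext k
  rw [← sub_sub]
  generalize ((k : ℕ) : ZMod N) - x = z
  rcases hz : z.val with _ | m
  · have hneg : ((N - 1 : ℕ) : ZMod N) = z - 1 := by
      rw [(ZMod.val_eq_zero z).mp hz, Nat.cast_sub NeZero.one_le, ZMod.natCast_self]
      simp
    rw [← hneg, ZMod.val_cast_of_lt (by omega), List.getD_eq_default _ _ (by omega)]
    rfl
  · have hm : ((m : ℕ) : ZMod N) = z - 1 := by
      rw [← ZMod.natCast_zmod_val z, hz]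
      push_cast
      ring
    have : m < N := by have := ZMod.val_lt z; omega
    rw [← hm, ZMod.val_cast_of_lt this]
    rfl

theorem pauliString_add_natCast (x : ZMod N) (n : ℕ) {w : List Pauli} (h : n + w.length ≤ N) :
    pauliString N (x + n) w = pauliString N x (List.replicate n I ++ w) := by
  induction n generalizing w with
  | zero => simp
  | succ n ih =>
    rw [Nat.cast_succ, ← add_assoc, pauliString_add_one _ (by omega),
      ih (by simp; omega), List.replicate_succ', List.append_assoc]
    rfl

theorem sum_pauliString_cons_I {w : List Pauli} (hw : w.length < N) :
    ∑ x, pauliString N x (I :: w) = ∑ x, pauliString N x w := by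
  simp_rw [← pauliString_add_one _ hw]
  exact Fintype.sum_equiv (Equiv.addRight 1) _ _ fun _ => rfl

theorem commute_pauliString_add_natCast (x : ZMod N) {m : ℕ} {v w : List Pauli}
    (hv : v.length ≤ m) (hw : m + w.length ≤ N) :
    Commute (pauliString N x v) (pauliString N (x + m) w) := by
  have hw' : (List.replicate m I ++ w).length ≤ N := by simpa using hw
  obtain ⟨h₁, h₂⟩ := wordPhase_replicate_append_eq_one w hv
  rw [pauliString_add_natCast x m hw, Commute, SemiconjBy, pauliString_mul x (by omega) hw',
    pauliString_mul x hw' (by omega), h₁, h₂, wordMul_comm]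

end PauliString

section Offsets

variable {N : ℕ} [NeZero N] {M : Type*}

theorem sum_range_natCast [AddCommMonoid M] (f : ZMod N → M) :
    ∑ j ∈ Finset.range N, f j = ∑ x, f x :=
  Finset.sum_nbij' (fun j => (j : ZMod N)) ZMod.val (by simp) (by simp [ZMod.val_lt])
    (fun j hj => ZMod.val_cast_of_lt (Finset.mem_range.mp hj))
    (fun x _ => ZMod.natCast_zmod_val x) fun _ _ => rfl

/-- Sorting the pairs `(x, y)` by the offset `y - x`; the offsets `-c, …, -1` are written as the
pairs `(x + c, x + n)` with `n < c`. -/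
theorem sum_sum_eq_sum_offsets [AddCommMonoid M] (F : ZMod N → ZMod N → M) {c : ℕ}
    (hc : c ≤ N) :
    ∑ x, ∑ y, F x y = ∑ n ∈ Finset.range c, ∑ x, F (x + c) (x + n)
      + ∑ m ∈ Finset.range (N - c), ∑ x, F x (x + m) := by
  have hshift (x : ZMod N) : ∑ y, F x y = ∑ n ∈ Finset.range N, F x (x + n) := by
    rw [sum_range_natCast (fun y => F x (x + y))]
    exact (Fintype.sum_equiv (Equiv.addLeft x) _ _ fun _ => rfl).symm
  have hwrap (n : ℕ) : ∑ x, F (x + c) (x + n) = ∑ x, F x (x + (N - c + n : ℕ)) := by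
    refine Fintype.sum_equiv (Equiv.addRight (c : ZMod N)) _ _ fun x => ?_
    rw [Equiv.coe_addRight, Nat.cast_add, Nat.cast_sub hc, ZMod.natCast_self]
    ring_nf
  rw [Finset.sum_congr rfl fun x _ => hshift x, Finset.sum_comm,
    show Finset.range N = Finset.range (N - c + c) by rw [Nat.sub_add_cancel hc],
    Finset.sum_range_add, add_comm]
  simp only [hwrap]

theorem sum_mul_sum_sub_sum_mul_sum [Ring M] {ι κ : Type*} [Fintype ι] [Fintype κ]
    (f : ι → M) (g : κ → M) :
    (∑ i, f i) * (∑ j, g j) - (∑ j, g j) * (∑ i, f i) =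
      ∑ i, ∑ j, (f i * g j - g j * f i) := by
  rw [Finset.sum_mul_sum, Finset.sum_mul_sum, Finset.sum_comm (s := Finset.univ (α := κ)),
    ← Finset.sum_sub_distrib]
  simp only [Finset.sum_sub_distrib]

end Offsets

def hamiltonianDensity (N : ℕ) (x : ZMod N) : Matrix (Fin N → Fin 2) (Fin N → Fin 2) ℂ :=
  pauliString N x [X, X, Z] + pauliString N x [Z, X, X]

def chargeDensity (N : ℕ) (x : ZMod N) : Matrix (Fin N → Fin 2) (Fin N → Fin 2) ℂ :=
  pauliString N x [X, X, Y, X, Z] + pauliString N x [X, I, Y, Z]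

section Chain

variable {N : ℕ} [NeZero N]

theorem sum_range_eq_sum_hamiltonianDensity (hN : 3 ≤ N) :
    ∑ j ∈ Finset.range N, (PX N (j % N) * PX N ((j+1) % N) * PZ N ((j+2) % N)
        + PZ N (j % N) * PX N ((j+1) % N) * PX N ((j+2) % N)) = ∑ x, hamiltonianDensity N x := by
  rw [← sum_range_natCast]
  refine Finset.sum_congr rfl fun j _ => ?_
  simp only [PX, PZ, show σ1 = X.toMatrix from rfl, show σ3 = Z.toMatrix from rfl,
    site_mod_eq_pauliString, Nat.cast_add]
  simp (disch := simp; omega) only [pauliString_add_natCast]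
  simp (disch := simp; omega) [pauliString_mul, hamiltonianDensity, wordMul, wordPhase, mul_def,
    Pauli.mul, phase]

theorem sum_range_eq_sum_chargeDensity (hN : 5 ≤ N) :
    ∑ j ∈ Finset.range N,
      (PX N (j % N) * PX N ((j+1) % N) * PY N ((j+2) % N) * PX N ((j+3) % N) * PZ N ((j+4) % N)
        + PX N (j % N) * PY N ((j+2) % N) * PZ N ((j+3) % N)) = ∑ x, chargeDensity N x := by
  rw [← sum_range_natCast]
  refine Finset.sum_congr rfl fun j _ => ?_
  simp only [PX, PY, PZ, show σ1 = X.toMatrix from rfl, show σ2 = Y.toMatrix from rfl,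
    show σ3 = Z.toMatrix from rfl, site_mod_eq_pauliString, Nat.cast_add]
  simp (disch := simp; omega) only [pauliString_add_natCast]
  simp (disch := simp; omega) [pauliString_mul, chargeDensity, wordMul, wordPhase, mul_def,
    Pauli.mul, phase]

theorem commute_chargeDensity_hamiltonianDensity_add (x : ZMod N) {m : ℕ} (hm : 5 ≤ m)
    (hmN : m + 3 ≤ N) :
    Commute (chargeDensity N x) (hamiltonianDensity N (x + m)) := by
  unfold chargeDensity hamiltonianDensity
  apply Commute.add_left <;> apply Commute.add_right <;>
    exact commute_pauliString_add_natCast x (by simp; omega) (by simpa using hmN)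

theorem sum_commutator_overlapping_eq_zero (hN : 7 ≤ N) :
    ∑ n ∈ Finset.range 2, ∑ x, (chargeDensity N (x + (2 : ℕ)) * hamiltonianDensity N (x + n)
        - hamiltonianDensity N (x + n) * chargeDensity N (x + (2 : ℕ)))
      + ∑ m ∈ Finset.range 5, ∑ x, (chargeDensity N x * hamiltonianDensity N (x + m)
        - hamiltonianDensity N (x + m) * chargeDensity N x) = 0 := by
  simp only [Finset.sum_range_succ, Finset.sum_range_zero, zero_add]
  simp (disch := simp; omega) only [chargeDensity, hamiltonianDensity, pauliString_add_natCast,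
    mul_add, add_mul, pauliString_mul]
  simp only [List.reduceReplicate, List.cons_append, List.nil_append, List.replicate_zero,
    List.replicate_one, wordPhase, phase, wordMul, mul_def, Pauli.mul, mul_one, one_mul, mul_neg,
    neg_mul, neg_neg, Complex.I_mul_I, neg_smul, one_smul, Finset.sum_sub_distrib,
    Finset.sum_add_distrib, Finset.sum_neg_distrib, ← Finset.smul_sum]
  -- Leading `I`s are a translation, absorbed by the sum over `x`; trailing ones change nothing.
  simp (disch := simp; omega) only [sum_pauliString_cons_I]
  have h₁ (x : ZMod N) : pauliString N x [X, X, Z, I] = pauliString N x [X, X, Z] :=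
    pauliString_append_replicate x [X, X, Z] 1
  have h₂ (x : ZMod N) : pauliString N x [X, X, Z, I, I] = pauliString N x [X, X, Z] :=
    pauliString_append_replicate x [X, X, Z] 2
  simp only [h₁, h₂]
  module

end Chain

theorem stmt6 (N : ℕ) (hN : 7 ≤ N) :
    let H := ∑ j ∈ Finset.range N,
      (PX N (j % N) * PX N ((j+1) % N) * PZ N ((j+2) % N)
        + PZ N (j % N) * PX N ((j+1) % N) * PX N ((j+2) % N));
    let Q := ∑ j ∈ Finset.range N,
      (PX N (j % N) * PX N ((j+1) % N) * PY N ((j+2) % N) * PX N ((j+3) % N)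
          * PZ N ((j+4) % N)
        + PX N (j % N) * PY N ((j+2) % N) * PZ N ((j+3) % N));
    Q * H = H * Q := by
  intro H Q
  have : NeZero N := ⟨by omega⟩
  have hH : H = ∑ x, hamiltonianDensity N x := sum_range_eq_sum_hamiltonianDensity (by omega)
  have hQ : Q = ∑ x, chargeDensity N x := sum_range_eq_sum_chargeDensity (by omega)
  rw [← sub_eq_zero, hQ, hH, sum_mul_sum_sub_sum_mul_sum,
    sum_sum_eq_sum_offsets _ (show 2 ≤ N by omega),
    ← Finset.sum_range_add_sum_Ico _ (show 5 ≤ N - 2 by omega), ← add_assoc,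
    sum_commutator_overlapping_eq_zero hN, zero_add]
  refine Finset.sum_eq_zero fun m hm => Finset.sum_eq_zero fun x _ => ?_
  rw [Finset.mem_Ico] at hm
  exact sub_eq_zero.mpr (commute_chargeDensity_hamiltonianDensity_add x hm.1 (by omega)).eq
end
end

section
/- For the composite-spin Hamiltonian H = Σ_n (c₁ (X⊗X)_n (Z⊗I)_{n+1} + c₂ (I⊗Z)_n (X⊗X)_{n+1}) on a periodic chain of M ≥ 3 composite sites, the operator Q = Σ_n (X⊗X)_n (Y⊗X)_{n+1} (Z⊗I)_{n+2} commutes with H, for any c₁, c₂ ∈ ℂ. -/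
open Matrix Kronecker

noncomputable section

/-- Composite-spin operator: `A ⊗ B` acting on the 4-dimensional composite site `n`
(of a chain of `N` composite sites), identity elsewhere. -/
def csite (N n : ℕ) (A B : Matrix (Fin 2) (Fin 2) ℂ) :
    Matrix (Fin N → Fin 2 × Fin 2) (Fin N → Fin 2 × Fin 2) ℂ :=
  site N n (A ⊗ₖ B)

open Finset

def lop {d : Type} [Fintype d] [DecidableEq d] (N : ℕ) (f : Fin N → Matrix d d ℂ) :
    Matrix (Fin N → d) (Fin N → d) ℂ :=
  Matrix.of fun x y => ∏ k, f k (x k) (y k)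

lemma lop_mul {d : Type} [Fintype d] [DecidableEq d] (N : ℕ) (f g : Fin N → Matrix d d ℂ) :
    lop N f * lop N g = lop N (fun k => f k * g k) := by
  ext x y
  simp only [lop, Matrix.mul_apply, Matrix.of_apply]
  rw [← Fintype.piFinset_univ]
  simp only [← Finset.prod_mul_distrib]
  rw [Finset.prod_univ_sum]

lemma site_eq_lop {d : Type} [Fintype d] [DecidableEq d] (N j : ℕ) (A : Matrix d d ℂ) :
    site N j A = lop N (fun k => if (k:ℕ) = j then A else 1) := by
  ext x y
  simp only [site, lop, Matrix.of_apply]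
  congr 1; ext k
  split <;> simp [Matrix.one_apply]

lemma lop_smul_eq {d : Type} [Fintype d] [DecidableEq d] (N : ℕ)
    (f g : Fin N → Matrix d d ℂ) (c : Fin N → ℂ) (h : ∀ k, f k = c k • g k) :
    lop N f = (∏ k, c k) • lop N g := by
  ext x y
  simp only [lop, Matrix.of_apply, Matrix.smul_apply, smul_eq_mul, h, Matrix.smul_apply]
  rw [← Finset.prod_mul_distrib]

lemma prod_ite_coe (M p : ℕ) (hp : p < M) (c : ℂ) :
    (∏ k : Fin M, if (k:ℕ) = p then c else 1) = c := by
  rw [Finset.prod_eq_single (⟨p, hp⟩ : Fin M)]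
  · simp
  · intro b _ hb
    rw [if_neg]
    simpa using fun h => hb (Fin.ext h)
  · simp

lemma shift_mod (M n a b : ℕ) (h : a % M = b % M) : (n + a) % M = (n + b) % M :=
  Nat.ModEq.add_left n h

lemma shift_mod_cancel (M n a b : ℕ) (h : (n + a) % M = (n + b) % M) : a % M = b % M :=
  Nat.ModEq.add_left_cancel' n h

lemma key_ne {M : ℕ} (hM : 5 ≤ M) (n : ℕ) {i j : ℕ} (hi : i < M) (hj : j < M) (hne : i ≠ j) :
    (n + i) % M ≠ (n + j) % M := by
  intro h
  exact hne (by simpa [Nat.mod_eq_of_lt hi, Nat.mod_eq_of_lt hj] using shift_mod_cancel M n i j h)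

lemma sum_shift {α : Type*} [AddCommMonoid α] (M : ℕ) (hM : 0 < M) (g : ℕ → α)
    (hper : ∀ x, g (x % M) = g x) (s : ℕ) :
    ∑ n ∈ Finset.range M, g (n + s) = ∑ n ∈ Finset.range M, g n := by
  have key : ∑ n ∈ Finset.range M, g ((n + s) % M) = ∑ n ∈ Finset.range M, g n := by
    apply Finset.sum_nbij' (fun n => (n + s) % M) (fun m => (m + (M - s % M)) % M)
    · intro a ha; exact Finset.mem_range.mpr (Nat.mod_lt _ hM)
    · intro a ha; exact Finset.mem_range.mpr (Nat.mod_lt _ hM)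
    · intro a ha
      have ha' := Finset.mem_range.mp ha
      obtain ⟨q, r, hr, hs⟩ : ∃ q r, r < M ∧ s = M * q + r :=
        ⟨s / M, s % M, Nat.mod_lt _ hM, (Nat.div_add_mod s M).symm ▸ by omega⟩
      subst hs
      rw [Nat.mod_add_mod]
      rw [Nat.mul_add_mod]
      have hrm : r % M = r := Nat.mod_eq_of_lt hr
      have : a + (M * q + r) + (M - r % M) = a + M * (q + 1) + (r - r % M) := by
        rw [hrm, Nat.mul_add, Nat.mul_one]; omega
      rw [this]
      have : r - r % M = 0 := by rw [Nat.mod_eq_of_lt hr]; omega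
      rw [this, Nat.add_zero, Nat.add_mul_mod_self_left, Nat.mod_eq_of_lt ha']
    · intro a ha
      have ha' := Finset.mem_range.mp ha
      rw [Nat.mod_add_mod]
      have h1 : s % M ≤ M := le_of_lt (Nat.mod_lt _ hM)
      have : a + (M - s % M) + s = a + (M - s % M) + (M * (s / M) + s % M) := by
        rw [Nat.div_add_mod]
      rw [this]
      have hm : s % M < M := Nat.mod_lt _ hM
      have : a + (M - s % M) + (M * (s / M) + s % M) = a + M * (s / M + 1) := by
        rw [Nat.mul_add, Nat.mul_one]; omega
      rw [this, Nat.add_mul_mod_self_left, Nat.mod_eq_of_lt ha']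
    · intro a ha; rw [hper]
  calc ∑ n ∈ Finset.range M, g (n + s) = ∑ n ∈ Finset.range M, g ((n + s) % M) := by
        exact (Finset.sum_congr rfl fun n _ => (hper _)).symm
      _ = _ := key

section Pauli
open Complex

lemma s1s1 : σ1 * σ1 = 1 := by
  ext i j; fin_cases i <;> fin_cases j <;>
    simp [σ1, Matrix.mul_apply, Fin.sum_univ_two, Matrix.one_apply]

lemma s2s2 : σ2 * σ2 = 1 := by
  ext i j; fin_cases i <;> fin_cases j <;>
    simp [σ2, Matrix.mul_apply, Fin.sum_univ_two, Matrix.one_apply, Complex.I_mul_I]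

lemma s3s3 : σ3 * σ3 = 1 := by
  ext i j; fin_cases i <;> fin_cases j <;>
    simp [σ3, Matrix.mul_apply, Fin.sum_univ_two, Matrix.one_apply]

lemma s2s3 : σ2 * σ3 = Complex.I • σ1 := by
  ext i j; fin_cases i <;> fin_cases j <;>
    simp [σ1, σ2, σ3, Matrix.mul_apply, Fin.sum_univ_two]

lemma s3s2 : σ3 * σ2 = (-Complex.I) • σ1 := by
  ext i j; fin_cases i <;> fin_cases j <;>
    simp [σ1, σ2, σ3, Matrix.mul_apply, Fin.sum_univ_two]

lemma s1s3 : σ1 * σ3 = (-Complex.I) • σ2 := by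
  ext i j; fin_cases i <;> fin_cases j <;>
    simp [σ1, σ2, σ3, Matrix.mul_apply, Fin.sum_univ_two, Complex.I_mul_I] <;> ring_nf
    <;> simp [Complex.I_sq]

lemma s3s1 : σ3 * σ1 = Complex.I • σ2 := by
  ext i j; fin_cases i <;> fin_cases j <;>
    simp [σ1, σ2, σ3, Matrix.mul_apply, Fin.sum_univ_two, Complex.I_mul_I] <;> ring_nf
    <;> simp [Complex.I_sq]

lemma s2s1 : σ2 * σ1 = (-Complex.I) • σ3 := by
  ext i j; fin_cases i <;> fin_cases j <;>
    simp [σ1, σ2, σ3, Matrix.mul_apply, Fin.sum_univ_two]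

lemma s1s2 : σ1 * σ2 = Complex.I • σ3 := by
  ext i j; fin_cases i <;> fin_cases j <;>
    simp [σ1, σ2, σ3, Matrix.mul_apply, Fin.sum_univ_two]

end Pauli

/-- 4×4 composite matrices -/
def MA : Matrix (Fin 2 × Fin 2) (Fin 2 × Fin 2) ℂ := σ1 ⊗ₖ σ1
def MB : Matrix (Fin 2 × Fin 2) (Fin 2 × Fin 2) ℂ := σ2 ⊗ₖ σ1
def MC : Matrix (Fin 2 × Fin 2) (Fin 2 × Fin 2) ℂ := σ3 ⊗ₖ (1 : Matrix (Fin 2) (Fin 2) ℂ)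
def MD : Matrix (Fin 2 × Fin 2) (Fin 2 × Fin 2) ℂ := (1 : Matrix (Fin 2) (Fin 2) ℂ) ⊗ₖ σ3
def ME : Matrix (Fin 2 × Fin 2) (Fin 2 × Fin 2) ℂ := σ1 ⊗ₖ σ2
def MF : Matrix (Fin 2 × Fin 2) (Fin 2 × Fin 2) ℂ := σ2 ⊗ₖ σ2

lemma mAA : MA * MA = 1 := by
  rw [MA, ← Matrix.mul_kronecker_mul, s1s1, Matrix.one_kronecker_one]
lemma mCC : MC * MC = 1 := by
  rw [MC, ← Matrix.mul_kronecker_mul, s3s3, Matrix.one_mul, Matrix.one_kronecker_one]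
lemma mBC : MB * MC = Complex.I • MA := by
  rw [MB, MC, MA, ← Matrix.mul_kronecker_mul, s2s3, Matrix.mul_one, Matrix.smul_kronecker]
lemma mCB : MC * MB = (-Complex.I) • MA := by
  rw [MB, MC, MA, ← Matrix.mul_kronecker_mul, s3s2, Matrix.one_mul, Matrix.smul_kronecker]
lemma mAC : MA * MC = (-Complex.I) • MB := by
  rw [MA, MC, MB, ← Matrix.mul_kronecker_mul, s1s3, Matrix.mul_one, Matrix.smul_kronecker]
lemma mCA : MC * MA = Complex.I • MB := by
  rw [MA, MC, MB, ← Matrix.mul_kronecker_mul, s3s1, Matrix.one_mul, Matrix.smul_kronecker]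
lemma mBA : MB * MA = (-Complex.I) • MC := by
  rw [MA, MB, MC, ← Matrix.mul_kronecker_mul, s2s1, s1s1, Matrix.smul_kronecker]
lemma mAB : MA * MB = Complex.I • MC := by
  rw [MA, MB, MC, ← Matrix.mul_kronecker_mul, s1s2, s1s1, Matrix.smul_kronecker]
lemma mAD : MA * MD = (-Complex.I) • ME := by
  rw [MA, MD, ME, ← Matrix.mul_kronecker_mul, s1s3, Matrix.mul_one, Matrix.kronecker_smul]
lemma mDA : MD * MA = Complex.I • ME := by
  rw [MA, MD, ME, ← Matrix.mul_kronecker_mul, s3s1, Matrix.one_mul, Matrix.kronecker_smul]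
lemma mBD : MB * MD = (-Complex.I) • MF := by
  rw [MB, MD, MF, ← Matrix.mul_kronecker_mul, s1s3, Matrix.mul_one, Matrix.kronecker_smul]
lemma mDB : MD * MB = Complex.I • MF := by
  rw [MB, MD, MF, ← Matrix.mul_kronecker_mul, s3s1, Matrix.one_mul, Matrix.kronecker_smul]
lemma mCD : MC * MD = MD * MC := by
  rw [MC, MD, ← Matrix.mul_kronecker_mul, ← Matrix.mul_kronecker_mul]
  simp

/-! ### Operator layer -/

def qf (M n : ℕ) : Fin M → Matrix (Fin 2 × Fin 2) (Fin 2 × Fin 2) ℂ := fun k =>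
  (if (k:ℕ) = n % M then MA else 1) * (if (k:ℕ) = (n+1) % M then MB else 1) *
    (if (k:ℕ) = (n+2) % M then MC else 1)

def h1f (M m : ℕ) : Fin M → Matrix (Fin 2 × Fin 2) (Fin 2 × Fin 2) ℂ := fun k =>
  (if (k:ℕ) = m % M then MA else 1) * (if (k:ℕ) = (m+1) % M then MC else 1)

def h2f (M m : ℕ) : Fin M → Matrix (Fin 2 × Fin 2) (Fin 2 × Fin 2) ℂ := fun k =>
  (if (k:ℕ) = m % M then MD else 1) * (if (k:ℕ) = (m+1) % M then MA else 1)

def g2f (M b : ℕ) : Fin M → Matrix (Fin 2 × Fin 2) (Fin 2 × Fin 2) ℂ := fun k =>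
  (if (k:ℕ) = b % M then MA else 1) * (if (k:ℕ) = (b+1) % M then MB else 1) *
    (if (k:ℕ) = (b+2) % M then MB else 1) * (if (k:ℕ) = (b+3) % M then MC else 1)

def ggf (M n : ℕ) : Fin M → Matrix (Fin 2 × Fin 2) (Fin 2 × Fin 2) ℂ := fun k =>
  (if (k:ℕ) = n % M then ME else 1) * (if (k:ℕ) = (n+1) % M then MC else 1) *
    (if (k:ℕ) = (n+2) % M then MC else 1)

def gg1f (M n : ℕ) : Fin M → Matrix (Fin 2 × Fin 2) (Fin 2 × Fin 2) ℂ := fun k =>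
  (if (k:ℕ) = n % M then MA else 1) * (if (k:ℕ) = (n+1) % M then MF else 1) *
    (if (k:ℕ) = (n+2) % M then MB else 1)

def hopL (M : ℕ) (c₁ c₂ : ℂ) (m : ℕ) :
    Matrix (Fin M → Fin 2 × Fin 2) (Fin M → Fin 2 × Fin 2) ℂ :=
  c₁ • lop M (h1f M m) + c₂ • lop M (h2f M m)

def Gop (M : ℕ) (c₁ c₂ : ℂ) (n m : ℕ) :
    Matrix (Fin M → Fin 2 × Fin 2) (Fin M → Fin 2 × Fin 2) ℂ :=
  lop M (qf M n) * hopL M c₁ c₂ m - hopL M c₁ c₂ m * lop M (qf M n)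

def L1 (M b : ℕ) := lop M (h1f M b)
def L2 (M b : ℕ) := lop M (g2f M b)

lemma mod_mod (x M : ℕ) : x % M % M = x % M := Nat.mod_mod_of_dvd x dvd_rfl

lemma h1f_mod (M x : ℕ) : h1f M (x % M) = h1f M x := by
  funext k; simp only [h1f, mod_mod, Nat.mod_add_mod]

lemma h2f_mod (M x : ℕ) : h2f M (x % M) = h2f M x := by
  funext k; simp only [h2f, mod_mod, Nat.mod_add_mod]

lemma g2f_mod (M x : ℕ) : g2f M (x % M) = g2f M x := by
  funext k; simp only [g2f, mod_mod, Nat.mod_add_mod]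

lemma hopL_mod (M : ℕ) (c₁ c₂ : ℂ) (x : ℕ) : hopL M c₁ c₂ (x % M) = hopL M c₁ c₂ x := by
  rw [hopL, hopL, h1f_mod, h2f_mod]

lemma lop_smul_eq' {d : Type} [Fintype d] [DecidableEq d] (N : ℕ)
    (f g : Fin N → Matrix d d ℂ) (c : Fin N → ℂ) (s : ℂ) (h : ∀ k, f k = c k • g k)
    (hc : (∏ k, c k) = s) : lop N f = s • lop N g := by
  rw [lop_smul_eq N f g c h, hc]

lemma lop_comm_of {d : Type} [Fintype d] [DecidableEq d] (N : ℕ)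
    (f g : Fin N → Matrix d d ℂ) (h : ∀ k, f k * g k = g k * f k) :
    lop N f * lop N g = lop N g * lop N f := by
  rw [lop_mul, lop_mul]; exact congrArg (lop N) (funext h)

lemma qf_one (M n : ℕ) (k : Fin M) (h0 : ¬ (k:ℕ) = n % M) (h1 : ¬ (k:ℕ) = (n+1) % M)
    (h2 : ¬ (k:ℕ) = (n+2) % M) : qf M n k = 1 := by simp [qf, h0, h1, h2]

lemma h1f_one (M m : ℕ) (k : Fin M) (h0 : ¬ (k:ℕ) = m % M) (h1 : ¬ (k:ℕ) = (m+1) % M) :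
    h1f M m k = 1 := by simp [h1f, h0, h1]

lemma h2f_one (M m : ℕ) (k : Fin M) (h0 : ¬ (k:ℕ) = m % M) (h1 : ¬ (k:ℕ) = (m+1) % M) :
    h2f M m k = 1 := by simp [h2f, h0, h1]

lemma qop_eq (M n : ℕ) :
    csite M (n % M) σ1 σ1 * csite M ((n+1) % M) σ2 σ1 * csite M ((n+2) % M) σ3 1
      = lop M (qf M n) := by
  rw [csite, csite, csite, site_eq_lop, site_eq_lop, site_eq_lop, lop_mul, lop_mul]
  rfl

lemma h1op_eq (M m : ℕ) :
    csite M (m % M) σ1 σ1 * csite M ((m+1) % M) σ3 1 = lop M (h1f M m) := by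
  rw [csite, csite, site_eq_lop, site_eq_lop, lop_mul]
  rfl

lemma h2op_eq (M m : ℕ) :
    csite M (m % M) 1 σ3 * csite M ((m+1) % M) σ1 σ1 = lop M (h2f M m) := by
  rw [csite, csite, site_eq_lop, site_eq_lop, lop_mul]
  rfl

lemma h1c0 (M : ℕ) (hM : 5 ≤ M) (n : ℕ) :
    lop M (qf M n) * lop M (h1f M n) - lop M (h1f M n) * lop M (qf M n)
      = (2 * Complex.I) • lop M (h1f M (n+1)) := by
  have hM0 : 0 < M := by omega
  have d01 : n % M ≠ (n + 1) % M := by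
    have h := key_ne (M := M) hM n (i := 0) (j := 1) (by omega) (by omega) (by omega)
    simpa using h
  have d10 := d01.symm
  have d02 : n % M ≠ (n + 2) % M := by
    have h := key_ne (M := M) hM n (i := 0) (j := 2) (by omega) (by omega) (by omega)
    simpa using h
  have d20 := d02.symm
  have d12 : (n + 1) % M ≠ (n + 2) % M := by
    have h := key_ne (M := M) hM n (i := 1) (j := 2) (by omega) (by omega) (by omega)
    simpa using h
  have d21 := d12.symm
  have e2 : n + 1 + 1 = n + 2 := by omega
  have hpt1 : ∀ k : Fin M, qf M n k * h1f M n k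
      = (if (k:ℕ) = (n+1) % M then Complex.I else 1) • h1f M (n+1) k := by
    intro k
    by_cases h0 : (k:ℕ) = n % M
    · simp [qf, h1f, h0, e2, d01, d10, d02, d20, d12, d21, mAA, mCC, mBC, mCB, mAC, mCA, mBA, mAB, mAD, mDA, mBD, mDB, mCD]
    · by_cases h1 : (k:ℕ) = (n+1) % M
      · simp [qf, h1f, h0, h1, e2, d01, d10, d02, d20, d12, d21, mAA, mCC, mBC, mCB, mAC, mCA, mBA, mAB, mAD, mDA, mBD, mDB, mCD]
      · by_cases h2 : (k:ℕ) = (n+2) % M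
        · simp [qf, h1f, h0, h1, h2, e2, d01, d10, d02, d20, d12, d21, mAA, mCC, mBC, mCB, mAC, mCA, mBA, mAB, mAD, mDA, mBD, mDB, mCD]
        · simp [qf, h1f, h0, h1, h2, e2]
  have hpt2 : ∀ k : Fin M, h1f M n k * qf M n k
      = (if (k:ℕ) = (n+1) % M then -Complex.I else 1) • h1f M (n+1) k := by
    intro k
    by_cases h0 : (k:ℕ) = n % M
    · simp [qf, h1f, h0, e2, d01, d10, d02, d20, d12, d21, mAA, mCC, mBC, mCB, mAC, mCA, mBA, mAB, mAD, mDA, mBD, mDB, mCD]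
    · by_cases h1 : (k:ℕ) = (n+1) % M
      · simp [qf, h1f, h0, h1, e2, d01, d10, d02, d20, d12, d21, mAA, mCC, mBC, mCB, mAC, mCA, mBA, mAB, mAD, mDA, mBD, mDB, mCD]
      · by_cases h2 : (k:ℕ) = (n+2) % M
        · simp [qf, h1f, h0, h1, h2, e2, d01, d10, d02, d20, d12, d21, mAA, mCC, mBC, mCB, mAC, mCA, mBA, mAB, mAD, mDA, mBD, mDB, mCD]
        · simp [qf, h1f, h0, h1, h2, e2]
  have E1 := lop_smul_eq' M _ _ _ Complex.I hpt1 (prod_ite_coe M _ (Nat.mod_lt _ hM0) _)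
  have E2 := lop_smul_eq' M _ _ _ (-Complex.I) hpt2 (prod_ite_coe M _ (Nat.mod_lt _ hM0) _)
  rw [lop_mul, lop_mul, E1, E2, ← sub_smul]
  congr 1
  ring

lemma h1c1 (M : ℕ) (hM : 5 ≤ M) (n : ℕ) :
    lop M (qf M n) * lop M (h1f M (n+1)) - lop M (h1f M (n+1)) * lop M (qf M n)
      = (-(2 * Complex.I)) • lop M (h1f M n) := by
  have hM0 : 0 < M := by omega
  have d01 : n % M ≠ (n + 1) % M := by
    have h := key_ne (M := M) hM n (i := 0) (j := 1) (by omega) (by omega) (by omega)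
    simpa using h
  have d10 := d01.symm
  have d02 : n % M ≠ (n + 2) % M := by
    have h := key_ne (M := M) hM n (i := 0) (j := 2) (by omega) (by omega) (by omega)
    simpa using h
  have d20 := d02.symm
  have d12 : (n + 1) % M ≠ (n + 2) % M := by
    have h := key_ne (M := M) hM n (i := 1) (j := 2) (by omega) (by omega) (by omega)
    simpa using h
  have d21 := d12.symm
  have e2 : n + 1 + 1 = n + 2 := by omega
  have hpt1 : ∀ k : Fin M, qf M n k * h1f M (n+1) k
      = (if (k:ℕ) = (n+1) % M then -Complex.I else 1) • h1f M n k := by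
    intro k
    by_cases h0 : (k:ℕ) = n % M
    · simp [qf, h1f, h0, e2, d01, d10, d02, d20, d12, d21, mAA, mCC, mBC, mCB, mAC, mCA, mBA, mAB, mAD, mDA, mBD, mDB, mCD]
    · by_cases h1 : (k:ℕ) = (n+1) % M
      · simp [qf, h1f, h0, h1, e2, d01, d10, d02, d20, d12, d21, mAA, mCC, mBC, mCB, mAC, mCA, mBA, mAB, mAD, mDA, mBD, mDB, mCD]
      · by_cases h2 : (k:ℕ) = (n+2) % M
        · simp [qf, h1f, h0, h1, h2, e2, d01, d10, d02, d20, d12, d21, mAA, mCC, mBC, mCB, mAC, mCA, mBA, mAB, mAD, mDA, mBD, mDB, mCD]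
        · simp [qf, h1f, h0, h1, h2, e2]
  have hpt2 : ∀ k : Fin M, h1f M (n+1) k * qf M n k
      = (if (k:ℕ) = (n+1) % M then Complex.I else 1) • h1f M n k := by
    intro k
    by_cases h0 : (k:ℕ) = n % M
    · simp [qf, h1f, h0, e2, d01, d10, d02, d20, d12, d21, mAA, mCC, mBC, mCB, mAC, mCA, mBA, mAB, mAD, mDA, mBD, mDB, mCD]
    · by_cases h1 : (k:ℕ) = (n+1) % M
      · simp [qf, h1f, h0, h1, e2, d01, d10, d02, d20, d12, d21, mAA, mCC, mBC, mCB, mAC, mCA, mBA, mAB, mAD, mDA, mBD, mDB, mCD]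
      · by_cases h2 : (k:ℕ) = (n+2) % M
        · simp [qf, h1f, h0, h1, h2, e2, d01, d10, d02, d20, d12, d21, mAA, mCC, mBC, mCB, mAC, mCA, mBA, mAB, mAD, mDA, mBD, mDB, mCD]
        · simp [qf, h1f, h0, h1, h2, e2]
  have E1 := lop_smul_eq' M _ _ _ (-Complex.I) hpt1 (prod_ite_coe M _ (Nat.mod_lt _ hM0) _)
  have E2 := lop_smul_eq' M _ _ _ Complex.I hpt2 (prod_ite_coe M _ (Nat.mod_lt _ hM0) _)
  rw [lop_mul, lop_mul, E1, E2, ← sub_smul]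
  congr 1
  ring

lemma h1c2 (M : ℕ) (hM : 5 ≤ M) (n : ℕ) :
    lop M (qf M n) * lop M (h1f M (n+2)) - lop M (h1f M (n+2)) * lop M (qf M n)
      = (2 * Complex.I) • lop M (g2f M n) := by
  have hM0 : 0 < M := by omega
  have d01 : n % M ≠ (n + 1) % M := by
    have h := key_ne (M := M) hM n (i := 0) (j := 1) (by omega) (by omega) (by omega)
    simpa using h
  have d10 := d01.symm
  have d02 : n % M ≠ (n + 2) % M := by
    have h := key_ne (M := M) hM n (i := 0) (j := 2) (by omega) (by omega) (by omega)
    simpa using h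
  have d20 := d02.symm
  have d03 : n % M ≠ (n + 3) % M := by
    have h := key_ne (M := M) hM n (i := 0) (j := 3) (by omega) (by omega) (by omega)
    simpa using h
  have d30 := d03.symm
  have d12 : (n + 1) % M ≠ (n + 2) % M := by
    have h := key_ne (M := M) hM n (i := 1) (j := 2) (by omega) (by omega) (by omega)
    simpa using h
  have d21 := d12.symm
  have d13 : (n + 1) % M ≠ (n + 3) % M := by
    have h := key_ne (M := M) hM n (i := 1) (j := 3) (by omega) (by omega) (by omega)
    simpa using h
  have d31 := d13.symm
  have d23 : (n + 2) % M ≠ (n + 3) % M := by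
    have h := key_ne (M := M) hM n (i := 2) (j := 3) (by omega) (by omega) (by omega)
    simpa using h
  have d32 := d23.symm
  have e3 : n + 2 + 1 = n + 3 := by omega
  have hpt1 : ∀ k : Fin M, qf M n k * h1f M (n+2) k
      = (if (k:ℕ) = (n+2) % M then Complex.I else 1) • g2f M n k := by
    intro k
    by_cases h0 : (k:ℕ) = n % M
    · simp [qf, h1f, g2f, h0, e3, d01, d10, d02, d20, d03, d30, d12, d21, d13, d31, d23, d32, mAA, mCC, mBC, mCB, mAC, mCA, mBA, mAB, mAD, mDA, mBD, mDB, mCD]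
    · by_cases h1 : (k:ℕ) = (n+1) % M
      · simp [qf, h1f, g2f, h0, h1, e3, d01, d10, d02, d20, d03, d30, d12, d21, d13, d31, d23, d32, mAA, mCC, mBC, mCB, mAC, mCA, mBA, mAB, mAD, mDA, mBD, mDB, mCD]
      · by_cases h2 : (k:ℕ) = (n+2) % M
        · simp [qf, h1f, g2f, h0, h1, h2, e3, d01, d10, d02, d20, d03, d30, d12, d21, d13, d31, d23, d32, mAA, mCC, mBC, mCB, mAC, mCA, mBA, mAB, mAD, mDA, mBD, mDB, mCD]
        · by_cases h3 : (k:ℕ) = (n+3) % M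
          · simp [qf, h1f, g2f, h0, h1, h2, h3, e3, d01, d10, d02, d20, d03, d30, d12, d21, d13, d31, d23, d32, mAA, mCC, mBC, mCB, mAC, mCA, mBA, mAB, mAD, mDA, mBD, mDB, mCD]
          · simp [qf, h1f, g2f, h0, h1, h2, h3, e3]
  have hpt2 : ∀ k : Fin M, h1f M (n+2) k * qf M n k
      = (if (k:ℕ) = (n+2) % M then -Complex.I else 1) • g2f M n k := by
    intro k
    by_cases h0 : (k:ℕ) = n % M
    · simp [qf, h1f, g2f, h0, e3, d01, d10, d02, d20, d03, d30, d12, d21, d13, d31, d23, d32, mAA, mCC, mBC, mCB, mAC, mCA, mBA, mAB, mAD, mDA, mBD, mDB, mCD]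
    · by_cases h1 : (k:ℕ) = (n+1) % M
      · simp [qf, h1f, g2f, h0, h1, e3, d01, d10, d02, d20, d03, d30, d12, d21, d13, d31, d23, d32, mAA, mCC, mBC, mCB, mAC, mCA, mBA, mAB, mAD, mDA, mBD, mDB, mCD]
      · by_cases h2 : (k:ℕ) = (n+2) % M
        · simp [qf, h1f, g2f, h0, h1, h2, e3, d01, d10, d02, d20, d03, d30, d12, d21, d13, d31, d23, d32, mAA, mCC, mBC, mCB, mAC, mCA, mBA, mAB, mAD, mDA, mBD, mDB, mCD]
        · by_cases h3 : (k:ℕ) = (n+3) % M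
          · simp [qf, h1f, g2f, h0, h1, h2, h3, e3, d01, d10, d02, d20, d03, d30, d12, d21, d13, d31, d23, d32, mAA, mCC, mBC, mCB, mAC, mCA, mBA, mAB, mAD, mDA, mBD, mDB, mCD]
          · simp [qf, h1f, g2f, h0, h1, h2, h3, e3]
  have E1 := lop_smul_eq' M _ _ _ Complex.I hpt1 (prod_ite_coe M _ (Nat.mod_lt _ hM0) _)
  have E2 := lop_smul_eq' M _ _ _ (-Complex.I) hpt2 (prod_ite_coe M _ (Nat.mod_lt _ hM0) _)
  rw [lop_mul, lop_mul, E1, E2, ← sub_smul]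
  congr 1
  ring

lemma h1cM1 (M : ℕ) (hM : 5 ≤ M) (n : ℕ) :
    lop M (qf M n) * lop M (h1f M (n+(M-1))) - lop M (h1f M (n+(M-1))) * lop M (qf M n)
      = (-(2 * Complex.I)) • lop M (g2f M (n+(M-1))) := by
  have hM0 : 0 < M := by omega
  have d01 : n % M ≠ (n + 1) % M := by
    have h := key_ne (M := M) hM n (i := 0) (j := 1) (by omega) (by omega) (by omega)
    simpa using h
  have d10 := d01.symm
  have d02 : n % M ≠ (n + 2) % M := by
    have h := key_ne (M := M) hM n (i := 0) (j := 2) (by omega) (by omega) (by omega)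
    simpa using h
  have d20 := d02.symm
  have d12 : (n + 1) % M ≠ (n + 2) % M := by
    have h := key_ne (M := M) hM n (i := 1) (j := 2) (by omega) (by omega) (by omega)
    simpa using h
  have d21 := d12.symm
  have dg0 : (n + (M - 1)) % M ≠ n % M := by
    have h := key_ne (M := M) hM n (i := M - 1) (j := 0) (by omega) (by omega) (by omega)
    simpa using h
  have d0g := dg0.symm
  have dg1 : (n + (M - 1)) % M ≠ (n + 1) % M := by
    have h := key_ne (M := M) hM n (i := M - 1) (j := 1) (by omega) (by omega) (by omega)
    simpa using h
  have d1g := dg1.symm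
  have dg2 : (n + (M - 1)) % M ≠ (n + 2) % M := by
    have h := key_ne (M := M) hM n (i := M - 1) (j := 2) (by omega) (by omega) (by omega)
    simpa using h
  have d2g := dg2.symm
  have r1 : (n + (M-1) + 1) % M = n % M := by
    have e : n + (M-1) + 1 = n + M := by omega
    rw [e, Nat.add_mod_right]
  have r2 : (n + (M-1) + 2) % M = (n+1) % M := by
    have e : n + (M-1) + 2 = (n+1) + M := by omega
    rw [e, Nat.add_mod_right]
  have r3 : (n + (M-1) + 3) % M = (n+2) % M := by
    have e : n + (M-1) + 3 = (n+2) + M := by omega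
    rw [e, Nat.add_mod_right]
  have hpt1 : ∀ k : Fin M, qf M n k * h1f M (n+(M-1)) k
      = (if (k:ℕ) = n % M then -Complex.I else 1) • g2f M (n+(M-1)) k := by
    intro k
    by_cases hg : (k:ℕ) = (n + (M-1)) % M
    · simp [qf, h1f, g2f, hg, r1, r2, r3, d01, d10, d02, d20, d12, d21, dg0, d0g, dg1, d1g, dg2, d2g, mAA, mCC, mBC, mCB, mAC, mCA, mBA, mAB, mAD, mDA, mBD, mDB, mCD]
    · by_cases h0 : (k:ℕ) = n % M
      · simp [qf, h1f, g2f, hg, h0, r1, r2, r3, d01, d10, d02, d20, d12, d21, dg0, d0g, dg1, d1g, dg2, d2g, mAA, mCC, mBC, mCB, mAC, mCA, mBA, mAB, mAD, mDA, mBD, mDB, mCD]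
      · by_cases h1 : (k:ℕ) = (n+1) % M
        · simp [qf, h1f, g2f, hg, h0, h1, r1, r2, r3, d01, d10, d02, d20, d12, d21, dg0, d0g, dg1, d1g, dg2, d2g, mAA, mCC, mBC, mCB, mAC, mCA, mBA, mAB, mAD, mDA, mBD, mDB, mCD]
        · by_cases h2 : (k:ℕ) = (n+2) % M
          · simp [qf, h1f, g2f, hg, h0, h1, h2, r1, r2, r3, d01, d10, d02, d20, d12, d21, dg0, d0g, dg1, d1g, dg2, d2g, mAA, mCC, mBC, mCB, mAC, mCA, mBA, mAB, mAD, mDA, mBD, mDB, mCD]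
          · simp [qf, h1f, g2f, hg, h0, h1, h2, r1, r2, r3]
  have hpt2 : ∀ k : Fin M, h1f M (n+(M-1)) k * qf M n k
      = (if (k:ℕ) = n % M then Complex.I else 1) • g2f M (n+(M-1)) k := by
    intro k
    by_cases hg : (k:ℕ) = (n + (M-1)) % M
    · simp [qf, h1f, g2f, hg, r1, r2, r3, d01, d10, d02, d20, d12, d21, dg0, d0g, dg1, d1g, dg2, d2g, mAA, mCC, mBC, mCB, mAC, mCA, mBA, mAB, mAD, mDA, mBD, mDB, mCD]
    · by_cases h0 : (k:ℕ) = n % M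
      · simp [qf, h1f, g2f, hg, h0, r1, r2, r3, d01, d10, d02, d20, d12, d21, dg0, d0g, dg1, d1g, dg2, d2g, mAA, mCC, mBC, mCB, mAC, mCA, mBA, mAB, mAD, mDA, mBD, mDB, mCD]
      · by_cases h1 : (k:ℕ) = (n+1) % M
        · simp [qf, h1f, g2f, hg, h0, h1, r1, r2, r3, d01, d10, d02, d20, d12, d21, dg0, d0g, dg1, d1g, dg2, d2g, mAA, mCC, mBC, mCB, mAC, mCA, mBA, mAB, mAD, mDA, mBD, mDB, mCD]
        · by_cases h2 : (k:ℕ) = (n+2) % M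
          · simp [qf, h1f, g2f, hg, h0, h1, h2, r1, r2, r3, d01, d10, d02, d20, d12, d21, dg0, d0g, dg1, d1g, dg2, d2g, mAA, mCC, mBC, mCB, mAC, mCA, mBA, mAB, mAD, mDA, mBD, mDB, mCD]
          · simp [qf, h1f, g2f, hg, h0, h1, h2, r1, r2, r3]
  have E1 := lop_smul_eq' M _ _ _ (-Complex.I) hpt1 (prod_ite_coe M _ (Nat.mod_lt _ hM0) _)
  have E2 := lop_smul_eq' M _ _ _ Complex.I hpt2 (prod_ite_coe M _ (Nat.mod_lt _ hM0) _)
  rw [lop_mul, lop_mul, E1, E2, ← sub_smul]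
  congr 1
  ring

lemma h2c0 (M : ℕ) (hM : 5 ≤ M) (n : ℕ) :
    lop M (qf M n) * lop M (h2f M n) = lop M (h2f M n) * lop M (qf M n) := by
  have hM0 : 0 < M := by omega
  have d01 : n % M ≠ (n + 1) % M := by
    have h := key_ne (M := M) hM n (i := 0) (j := 1) (by omega) (by omega) (by omega)
    simpa using h
  have d10 := d01.symm
  have d02 : n % M ≠ (n + 2) % M := by
    have h := key_ne (M := M) hM n (i := 0) (j := 2) (by omega) (by omega) (by omega)
    simpa using h
  have d20 := d02.symm
  have d12 : (n + 1) % M ≠ (n + 2) % M := by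
    have h := key_ne (M := M) hM n (i := 1) (j := 2) (by omega) (by omega) (by omega)
    simpa using h
  have d21 := d12.symm
  have hpt1 : ∀ k : Fin M, qf M n k * h2f M n k
      = ((if (k:ℕ) = n % M then -Complex.I else 1) *
          (if (k:ℕ) = (n+1) % M then -Complex.I else 1)) • ggf M n k := by
    intro k
    by_cases h0 : (k:ℕ) = n % M
    · simp [qf, h2f, ggf, h0, mul_smul_comm, smul_mul_assoc, d01, d10, d02, d20, d12, d21, mAA, mCC, mBC, mCB, mAC, mCA, mBA, mAB, mAD, mDA, mBD, mDB, mCD]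
    · by_cases h1 : (k:ℕ) = (n+1) % M
      · simp [qf, h2f, ggf, h0, h1, mul_smul_comm, smul_mul_assoc, d01, d10, d02, d20, d12, d21, mAA, mCC, mBC, mCB, mAC, mCA, mBA, mAB, mAD, mDA, mBD, mDB, mCD]
      · by_cases h2 : (k:ℕ) = (n+2) % M
        · simp [qf, h2f, ggf, h0, h1, h2, mul_smul_comm, smul_mul_assoc, d01, d10, d02, d20, d12, d21, mAA, mCC, mBC, mCB, mAC, mCA, mBA, mAB, mAD, mDA, mBD, mDB, mCD]
        · simp [qf, h2f, ggf, h0, h1, h2, mul_smul_comm, smul_mul_assoc]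
  have hpt2 : ∀ k : Fin M, h2f M n k * qf M n k
      = ((if (k:ℕ) = n % M then Complex.I else 1) *
          (if (k:ℕ) = (n+1) % M then Complex.I else 1)) • ggf M n k := by
    intro k
    by_cases h0 : (k:ℕ) = n % M
    · simp [qf, h2f, ggf, h0, mul_smul_comm, smul_mul_assoc, d01, d10, d02, d20, d12, d21, mAA, mCC, mBC, mCB, mAC, mCA, mBA, mAB, mAD, mDA, mBD, mDB, mCD]
    · by_cases h1 : (k:ℕ) = (n+1) % M
      · simp [qf, h2f, ggf, h0, h1, mul_smul_comm, smul_mul_assoc, d01, d10, d02, d20, d12, d21, mAA, mCC, mBC, mCB, mAC, mCA, mBA, mAB, mAD, mDA, mBD, mDB, mCD]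
      · by_cases h2 : (k:ℕ) = (n+2) % M
        · simp [qf, h2f, ggf, h0, h1, h2, mul_smul_comm, smul_mul_assoc, d01, d10, d02, d20, d12, d21, mAA, mCC, mBC, mCB, mAC, mCA, mBA, mAB, mAD, mDA, mBD, mDB, mCD]
        · simp [qf, h2f, ggf, h0, h1, h2, mul_smul_comm, smul_mul_assoc]
  have E1 := lop_smul_eq' M _ _ _ (-1 : ℂ) hpt1 (by
    rw [Finset.prod_mul_distrib, prod_ite_coe M (n % M) (Nat.mod_lt _ hM0) (-Complex.I),
      prod_ite_coe M ((n+1) % M) (Nat.mod_lt _ hM0) (-Complex.I)]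
    simp [Complex.I_mul_I])
  have E2 := lop_smul_eq' M _ _ _ (-1 : ℂ) hpt2 (by
    rw [Finset.prod_mul_distrib, prod_ite_coe M (n % M) (Nat.mod_lt _ hM0) Complex.I,
      prod_ite_coe M ((n+1) % M) (Nat.mod_lt _ hM0) Complex.I]
    simp [Complex.I_mul_I])
  rw [lop_mul, lop_mul, E1, E2]

lemma h2c1 (M : ℕ) (hM : 5 ≤ M) (n : ℕ) :
    lop M (qf M n) * lop M (h2f M (n+1)) = lop M (h2f M (n+1)) * lop M (qf M n) := by
  have hM0 : 0 < M := by omega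
  have d01 : n % M ≠ (n + 1) % M := by
    have h := key_ne (M := M) hM n (i := 0) (j := 1) (by omega) (by omega) (by omega)
    simpa using h
  have d10 := d01.symm
  have d02 : n % M ≠ (n + 2) % M := by
    have h := key_ne (M := M) hM n (i := 0) (j := 2) (by omega) (by omega) (by omega)
    simpa using h
  have d20 := d02.symm
  have d12 : (n + 1) % M ≠ (n + 2) % M := by
    have h := key_ne (M := M) hM n (i := 1) (j := 2) (by omega) (by omega) (by omega)
    simpa using h
  have d21 := d12.symm
  have e2 : n + 1 + 1 = n + 2 := by omega
  have hpt1 : ∀ k : Fin M, qf M n k * h2f M (n+1) k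
      = ((if (k:ℕ) = (n+1) % M then -Complex.I else 1) *
          (if (k:ℕ) = (n+2) % M then Complex.I else 1)) • gg1f M n k := by
    intro k
    by_cases h0 : (k:ℕ) = n % M
    · simp [qf, h2f, gg1f, h0, e2, mul_smul_comm, smul_mul_assoc, d01, d10, d02, d20, d12, d21, mAA, mCC, mBC, mCB, mAC, mCA, mBA, mAB, mAD, mDA, mBD, mDB, mCD]
    · by_cases h1 : (k:ℕ) = (n+1) % M
      · simp [qf, h2f, gg1f, h0, h1, e2, mul_smul_comm, smul_mul_assoc, d01, d10, d02, d20, d12, d21, mAA, mCC, mBC, mCB, mAC, mCA, mBA, mAB, mAD, mDA, mBD, mDB, mCD]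
      · by_cases h2 : (k:ℕ) = (n+2) % M
        · simp [qf, h2f, gg1f, h0, h1, h2, e2, mul_smul_comm, smul_mul_assoc, d01, d10, d02, d20, d12, d21, mAA, mCC, mBC, mCB, mAC, mCA, mBA, mAB, mAD, mDA, mBD, mDB, mCD]
        · simp [qf, h2f, gg1f, h0, h1, h2, e2, mul_smul_comm, smul_mul_assoc]
  have hpt2 : ∀ k : Fin M, h2f M (n+1) k * qf M n k
      = ((if (k:ℕ) = (n+1) % M then Complex.I else 1) *
          (if (k:ℕ) = (n+2) % M then -Complex.I else 1)) • gg1f M n k := by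
    intro k
    by_cases h0 : (k:ℕ) = n % M
    · simp [qf, h2f, gg1f, h0, e2, mul_smul_comm, smul_mul_assoc, d01, d10, d02, d20, d12, d21, mAA, mCC, mBC, mCB, mAC, mCA, mBA, mAB, mAD, mDA, mBD, mDB, mCD]
    · by_cases h1 : (k:ℕ) = (n+1) % M
      · simp [qf, h2f, gg1f, h0, h1, e2, mul_smul_comm, smul_mul_assoc, d01, d10, d02, d20, d12, d21, mAA, mCC, mBC, mCB, mAC, mCA, mBA, mAB, mAD, mDA, mBD, mDB, mCD]
      · by_cases h2 : (k:ℕ) = (n+2) % M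
        · simp [qf, h2f, gg1f, h0, h1, h2, e2, mul_smul_comm, smul_mul_assoc, d01, d10, d02, d20, d12, d21, mAA, mCC, mBC, mCB, mAC, mCA, mBA, mAB, mAD, mDA, mBD, mDB, mCD]
        · simp [qf, h2f, gg1f, h0, h1, h2, e2, mul_smul_comm, smul_mul_assoc]
  have E1 := lop_smul_eq' M _ _ _ (1 : ℂ) hpt1 (by
    rw [Finset.prod_mul_distrib, prod_ite_coe M ((n+1) % M) (Nat.mod_lt _ hM0) (-Complex.I),
      prod_ite_coe M ((n+2) % M) (Nat.mod_lt _ hM0) Complex.I]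
    simp [Complex.I_mul_I])
  have E2 := lop_smul_eq' M _ _ _ (1 : ℂ) hpt2 (by
    rw [Finset.prod_mul_distrib, prod_ite_coe M ((n+1) % M) (Nat.mod_lt _ hM0) Complex.I,
      prod_ite_coe M ((n+2) % M) (Nat.mod_lt _ hM0) (-Complex.I)]
    simp [Complex.I_mul_I])
  rw [lop_mul, lop_mul, E1, E2]

lemma h2c2 (M : ℕ) (hM : 5 ≤ M) (n : ℕ) :
    lop M (qf M n) * lop M (h2f M (n+2)) = lop M (h2f M (n+2)) * lop M (qf M n) := by
  have hM0 : 0 < M := by omega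
  have d01 : n % M ≠ (n + 1) % M := by
    have h := key_ne (M := M) hM n (i := 0) (j := 1) (by omega) (by omega) (by omega)
    simpa using h
  have d10 := d01.symm
  have d02 : n % M ≠ (n + 2) % M := by
    have h := key_ne (M := M) hM n (i := 0) (j := 2) (by omega) (by omega) (by omega)
    simpa using h
  have d20 := d02.symm
  have d03 : n % M ≠ (n + 3) % M := by
    have h := key_ne (M := M) hM n (i := 0) (j := 3) (by omega) (by omega) (by omega)
    simpa using h
  have d30 := d03.symm
  have d12 : (n + 1) % M ≠ (n + 2) % M := by
    have h := key_ne (M := M) hM n (i := 1) (j := 2) (by omega) (by omega) (by omega)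
    simpa using h
  have d21 := d12.symm
  have d13 : (n + 1) % M ≠ (n + 3) % M := by
    have h := key_ne (M := M) hM n (i := 1) (j := 3) (by omega) (by omega) (by omega)
    simpa using h
  have d31 := d13.symm
  have d23 : (n + 2) % M ≠ (n + 3) % M := by
    have h := key_ne (M := M) hM n (i := 2) (j := 3) (by omega) (by omega) (by omega)
    simpa using h
  have d32 := d23.symm
  have e3 : n + 2 + 1 = n + 3 := by omega
  apply lop_comm_of
  intro k
  by_cases h0 : (k:ℕ) = n % M
  · simp [qf, h2f, h0, e3, d01, d10, d02, d20, d03, d30, d12, d21, d13, d31, d23, d32, mAA, mCC, mBC, mCB, mAC, mCA, mBA, mAB, mAD, mDA, mBD, mDB, mCD]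
  · by_cases h1 : (k:ℕ) = (n+1) % M
    · simp [qf, h2f, h0, h1, e3, d01, d10, d02, d20, d03, d30, d12, d21, d13, d31, d23, d32, mAA, mCC, mBC, mCB, mAC, mCA, mBA, mAB, mAD, mDA, mBD, mDB, mCD]
    · by_cases h2 : (k:ℕ) = (n+2) % M
      · simp [qf, h2f, h0, h1, h2, e3, d01, d10, d02, d20, d03, d30, d12, d21, d13, d31, d23, d32, mAA, mCC, mBC, mCB, mAC, mCA, mBA, mAB, mAD, mDA, mBD, mDB, mCD]
      · by_cases h3 : (k:ℕ) = (n+3) % M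
        · simp [qf, h2f, h0, h1, h2, h3, e3, d01, d10, d02, d20, d03, d30, d12, d21, d13, d31, d23, d32, mAA, mCC, mBC, mCB, mAC, mCA, mBA, mAB, mAD, mDA, mBD, mDB, mCD]
        · simp [qf, h2f, h0, h1, h2, h3, e3]

lemma h2cM1 (M : ℕ) (hM : 5 ≤ M) (n : ℕ) :
    lop M (qf M n) * lop M (h2f M (n+(M-1))) = lop M (h2f M (n+(M-1))) * lop M (qf M n) := by
  have hM0 : 0 < M := by omega
  have d01 : n % M ≠ (n + 1) % M := by
    have h := key_ne (M := M) hM n (i := 0) (j := 1) (by omega) (by omega) (by omega)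
    simpa using h
  have d10 := d01.symm
  have d02 : n % M ≠ (n + 2) % M := by
    have h := key_ne (M := M) hM n (i := 0) (j := 2) (by omega) (by omega) (by omega)
    simpa using h
  have d20 := d02.symm
  have d12 : (n + 1) % M ≠ (n + 2) % M := by
    have h := key_ne (M := M) hM n (i := 1) (j := 2) (by omega) (by omega) (by omega)
    simpa using h
  have d21 := d12.symm
  have dg0 : (n + (M - 1)) % M ≠ n % M := by
    have h := key_ne (M := M) hM n (i := M - 1) (j := 0) (by omega) (by omega) (by omega)
    simpa using h
  have d0g := dg0.symm
  have dg1 : (n + (M - 1)) % M ≠ (n + 1) % M := by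
    have h := key_ne (M := M) hM n (i := M - 1) (j := 1) (by omega) (by omega) (by omega)
    simpa using h
  have d1g := dg1.symm
  have dg2 : (n + (M - 1)) % M ≠ (n + 2) % M := by
    have h := key_ne (M := M) hM n (i := M - 1) (j := 2) (by omega) (by omega) (by omega)
    simpa using h
  have d2g := dg2.symm
  have r1 : (n + (M-1) + 1) % M = n % M := by
    have e : n + (M-1) + 1 = n + M := by omega
    rw [e, Nat.add_mod_right]
  apply lop_comm_of
  intro k
  by_cases hg : (k:ℕ) = (n + (M-1)) % M
  · simp [qf, h2f, hg, r1, d01, d10, d02, d20, d12, d21, dg0, d0g, dg1, d1g, dg2, d2g, mAA, mCC, mBC, mCB, mAC, mCA, mBA, mAB, mAD, mDA, mBD, mDB, mCD]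
  · by_cases h0 : (k:ℕ) = n % M
    · simp [qf, h2f, hg, h0, r1, d01, d10, d02, d20, d12, d21, dg0, d0g, dg1, d1g, dg2, d2g, mAA, mCC, mBC, mCB, mAC, mCA, mBA, mAB, mAD, mDA, mBD, mDB, mCD]
    · by_cases h1 : (k:ℕ) = (n+1) % M
      · simp [qf, h2f, hg, h0, h1, r1, d01, d10, d02, d20, d12, d21, dg0, d0g, dg1, d1g, dg2, d2g, mAA, mCC, mBC, mCB, mAC, mCA, mBA, mAB, mAD, mDA, mBD, mDB, mCD]
      · by_cases h2 : (k:ℕ) = (n+2) % M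
        · simp [qf, h2f, hg, h0, h1, h2, r1, d01, d10, d02, d20, d12, d21, dg0, d0g, dg1, d1g, dg2, d2g, mAA, mCC, mBC, mCB, mAC, mCA, mBA, mAB, mAD, mDA, mBD, mDB, mCD]
        · simp [qf, h2f, hg, h0, h1, h2, r1]

lemma far_h1 (M : ℕ) (hM : 5 ≤ M) (n j : ℕ) (h3 : 3 ≤ j) (hj : j + 2 ≤ M) :
    lop M (qf M n) * lop M (h1f M (n+j)) = lop M (h1f M (n+j)) * lop M (qf M n) := by
  have e : n + j + 1 = n + (j + 1) := by omega
  have na0 : n % M ≠ (n + j) % M := by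
    have h := key_ne (M := M) hM n (i := 0) (j := j) (by omega) (by omega) (by omega)
    simpa using h
  have na1 : (n+1) % M ≠ (n + j) % M :=
    key_ne (M := M) hM n (i := 1) (j := j) (by omega) (by omega) (by omega)
  have na2 : (n+2) % M ≠ (n + j) % M :=
    key_ne (M := M) hM n (i := 2) (j := j) (by omega) (by omega) (by omega)
  have nb0 : n % M ≠ (n + j + 1) % M := by
    rw [e]
    have h := key_ne (M := M) hM n (i := 0) (j := j+1) (by omega) (by omega) (by omega)
    simpa using h
  have nb1 : (n+1) % M ≠ (n + j + 1) % M := by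
    rw [e]; exact key_ne (M := M) hM n (i := 1) (j := j+1) (by omega) (by omega) (by omega)
  have nb2 : (n+2) % M ≠ (n + j + 1) % M := by
    rw [e]; exact key_ne (M := M) hM n (i := 2) (j := j+1) (by omega) (by omega) (by omega)
  apply lop_comm_of
  intro k
  by_cases h0 : (k:ℕ) = n % M
  · rw [h1f_one M _ k (by rw [h0]; exact na0) (by rw [h0]; exact nb0), mul_one, one_mul]
  · by_cases h1 : (k:ℕ) = (n+1) % M
    · rw [h1f_one M _ k (by rw [h1]; exact na1) (by rw [h1]; exact nb1), mul_one, one_mul]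
    · by_cases h2 : (k:ℕ) = (n+2) % M
      · rw [h1f_one M _ k (by rw [h2]; exact na2) (by rw [h2]; exact nb2), mul_one, one_mul]
      · rw [qf_one M n k h0 h1 h2, mul_one, one_mul]

lemma far_h2 (M : ℕ) (hM : 5 ≤ M) (n j : ℕ) (h3 : 3 ≤ j) (hj : j + 2 ≤ M) :
    lop M (qf M n) * lop M (h2f M (n+j)) = lop M (h2f M (n+j)) * lop M (qf M n) := by
  have e : n + j + 1 = n + (j + 1) := by omega
  have na0 : n % M ≠ (n + j) % M := by
    have h := key_ne (M := M) hM n (i := 0) (j := j) (by omega) (by omega) (by omega)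
    simpa using h
  have na1 : (n+1) % M ≠ (n + j) % M :=
    key_ne (M := M) hM n (i := 1) (j := j) (by omega) (by omega) (by omega)
  have na2 : (n+2) % M ≠ (n + j) % M :=
    key_ne (M := M) hM n (i := 2) (j := j) (by omega) (by omega) (by omega)
  have nb0 : n % M ≠ (n + j + 1) % M := by
    rw [e]
    have h := key_ne (M := M) hM n (i := 0) (j := j+1) (by omega) (by omega) (by omega)
    simpa using h
  have nb1 : (n+1) % M ≠ (n + j + 1) % M := by
    rw [e]; exact key_ne (M := M) hM n (i := 1) (j := j+1) (by omega) (by omega) (by omega)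
  have nb2 : (n+2) % M ≠ (n + j + 1) % M := by
    rw [e]; exact key_ne (M := M) hM n (i := 2) (j := j+1) (by omega) (by omega) (by omega)
  apply lop_comm_of
  intro k
  by_cases h0 : (k:ℕ) = n % M
  · rw [h2f_one M _ k (by rw [h0]; exact na0) (by rw [h0]; exact nb0), mul_one, one_mul]
  · by_cases h1 : (k:ℕ) = (n+1) % M
    · rw [h2f_one M _ k (by rw [h1]; exact na1) (by rw [h1]; exact nb1), mul_one, one_mul]
    · by_cases h2 : (k:ℕ) = (n+2) % M
      · rw [h2f_one M _ k (by rw [h2]; exact na2) (by rw [h2]; exact nb2), mul_one, one_mul]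
      · rw [qf_one M n k h0 h1 h2, mul_one, one_mul]

lemma splitG (M : ℕ) (c₁ c₂ : ℂ) (n m : ℕ) :
    Gop M c₁ c₂ n m
      = c₁ • (lop M (qf M n) * lop M (h1f M m) - lop M (h1f M m) * lop M (qf M n))
        + c₂ • (lop M (qf M n) * lop M (h2f M m) - lop M (h2f M m) * lop M (qf M n)) := by
  simp only [Gop, hopL, mul_add, add_mul, smul_mul_assoc, mul_smul_comm, smul_sub]
  abel

lemma comm0 (M : ℕ) (hM : 5 ≤ M) (c₁ c₂ : ℂ) (n : ℕ) :
    Gop M c₁ c₂ n n = (c₁ * (2 * Complex.I)) • L1 M (n+1) := by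
  rw [splitG, h1c0 M hM n, h2c0 M hM n, sub_self, smul_zero, add_zero, smul_smul]
  rfl

lemma comm1 (M : ℕ) (hM : 5 ≤ M) (c₁ c₂ : ℂ) (n : ℕ) :
    Gop M c₁ c₂ n (n+1) = (c₁ * (-(2 * Complex.I))) • L1 M n := by
  rw [splitG, h1c1 M hM n, h2c1 M hM n, sub_self, smul_zero, add_zero, smul_smul]
  rfl

lemma comm2 (M : ℕ) (hM : 5 ≤ M) (c₁ c₂ : ℂ) (n : ℕ) :
    Gop M c₁ c₂ n (n+2) = (c₁ * (2 * Complex.I)) • L2 M n := by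
  rw [splitG, h1c2 M hM n, h2c2 M hM n, sub_self, smul_zero, add_zero, smul_smul]
  rfl

lemma commM1 (M : ℕ) (hM : 5 ≤ M) (c₁ c₂ : ℂ) (n : ℕ) :
    Gop M c₁ c₂ n (n+(M-1)) = (c₁ * (-(2 * Complex.I))) • L2 M (n+(M-1)) := by
  rw [splitG, h1cM1 M hM n, h2cM1 M hM n, sub_self, smul_zero, add_zero, smul_smul]
  rfl

lemma commFar (M : ℕ) (hM : 5 ≤ M) (c₁ c₂ : ℂ) (n j : ℕ) (h3 : 3 ≤ j) (hj : j + 2 ≤ M) :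
    Gop M c₁ c₂ n (n+j) = 0 := by
  rw [splitG, far_h1 M hM n j h3 hj, far_h2 M hM n j h3 hj, sub_self, sub_self,
    smul_zero, smul_zero, add_zero]

lemma innerSumQ (M : ℕ) (hM : 5 ≤ M) (c₁ c₂ : ℂ) (n : ℕ) :
    ∑ m ∈ Finset.range M, Gop M c₁ c₂ n m
      = ((c₁ * (2 * Complex.I)) • L1 M (n+1) + (c₁ * (-(2 * Complex.I))) • L1 M n)
        + ((c₁ * (2 * Complex.I)) • L2 M n
            + (c₁ * (-(2 * Complex.I))) • L2 M (n + (M-1))) := by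
  have hM0 : 0 < M := by omega
  have hper : ∀ x, Gop M c₁ c₂ n (x % M) = Gop M c₁ c₂ n x := by
    intro x; rw [Gop, Gop, hopL_mod]
  rw [← sum_shift M hM0 (Gop M c₁ c₂ n) hper n]
  have hsub : ({0, 1, 2, M-1} : Finset ℕ) ⊆ Finset.range M := by
    intro x hx
    simp only [Finset.mem_insert, Finset.mem_singleton] at hx
    simp only [Finset.mem_range]
    omega
  have hvan : ∀ x ∈ Finset.range M, x ∉ ({0, 1, 2, M-1} : Finset ℕ) →
      Gop M c₁ c₂ n (x + n) = 0 := by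
    intro x hx hnx
    simp only [Finset.mem_range] at hx
    simp only [Finset.mem_insert, Finset.mem_singleton] at hnx
    push_neg at hnx
    rw [add_comm]
    exact commFar M hM c₁ c₂ n x (by omega) (by omega)
  rw [← Finset.sum_subset hsub hvan]
  rw [show ({0, 1, 2, M-1} : Finset ℕ) = insert 0 (insert 1 (insert 2 {M-1})) from rfl]
  rw [Finset.sum_insert (by simp only [Finset.mem_insert, Finset.mem_singleton]; omega),
      Finset.sum_insert (by simp only [Finset.mem_insert, Finset.mem_singleton]; omega),
      Finset.sum_insert (by simp only [Finset.mem_singleton]; omega),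
      Finset.sum_singleton]
  rw [zero_add, show 1 + n = n + 1 from by omega, show 2 + n = n + 2 from by omega,
      show M - 1 + n = n + (M - 1) from by omega]
  rw [comm0 M hM c₁ c₂ n, comm1 M hM c₁ c₂ n, comm2 M hM c₁ c₂ n, commM1 M hM c₁ c₂ n]
  abel

lemma key_sum (M : ℕ) (hM : 5 ≤ M) (c₁ c₂ : ℂ) :
    ∑ n ∈ Finset.range M, ∑ m ∈ Finset.range M, Gop M c₁ c₂ n m = 0 := by
  have hM0 : 0 < M := by omega
  rw [Finset.sum_congr rfl (fun n _ => innerSumQ M hM c₁ c₂ n)]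
  rw [Finset.sum_add_distrib, Finset.sum_add_distrib, Finset.sum_add_distrib]
  rw [← Finset.smul_sum, ← Finset.smul_sum, ← Finset.smul_sum, ← Finset.smul_sum]
  rw [sum_shift M hM0 (L1 M) (fun x => congrArg (lop M) (h1f_mod M x)) 1]
  rw [sum_shift M hM0 (L2 M) (fun x => congrArg (lop M) (g2f_mod M x)) (M-1)]
  rw [← add_smul, ← add_smul]
  have hc : c₁ * (2 * Complex.I) + c₁ * (-(2 * Complex.I)) = 0 := by ring
  rw [hc, zero_smul, zero_smul, add_zero]

theorem stmt14 (M : ℕ) (hM : 5 ≤ M) (c₁ c₂ : ℂ) :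
    let H := ∑ n ∈ Finset.range M,
      (c₁ • (csite M (n % M) σ1 σ1 * csite M ((n+1) % M) σ3 1)
        + c₂ • (csite M (n % M) 1 σ3 * csite M ((n+1) % M) σ1 σ1));
    let Q := ∑ n ∈ Finset.range M,
      csite M (n % M) σ1 σ1 * csite M ((n+1) % M) σ2 σ1 * csite M ((n+2) % M) σ3 1;
    Q * H = H * Q := by
  intro H Q
  have hQ : Q = ∑ n ∈ Finset.range M, lop M (qf M n) :=
    Finset.sum_congr rfl fun n _ => qop_eq M n
  have hH : H = ∑ m ∈ Finset.range M, hopL M c₁ c₂ m :=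
    Finset.sum_congr rfl fun m _ => by rw [hopL, h1op_eq, h2op_eq]
  have expand : Q * H - H * Q
      = ∑ n ∈ Finset.range M, ∑ m ∈ Finset.range M, Gop M c₁ c₂ n m := by
    rw [hQ, hH, Finset.sum_mul_sum, Finset.sum_mul_sum]
    rw [Finset.sum_comm (s := Finset.range M) (t := Finset.range M)
        (f := fun m n => hopL M c₁ c₂ m * lop M (qf M n))]
    rw [← Finset.sum_sub_distrib]
    exact Finset.sum_congr rfl fun n _ => by
      rw [← Finset.sum_sub_distrib]
      exact Finset.sum_congr rfl fun m _ => rfl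
  have h0 : Q * H - H * Q = 0 := expand.trans (key_sum M hM c₁ c₂)
  exact sub_eq_zero.mp h0
end
end
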